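/- Fix d ∈ ℕ with d ≥ 1 and δ ∈ (0,1). Let M be a random d×d real matrix on a probability space that is almost surely symmetric positive semidefinite with integrable entries, and let V ∈ ℝ^{d×d} be a deterministic symmetric positive definite matrix such that E[M] ⪯ V in the Loewner order. Then the probability that M ⪯ (d/δ)·V fails is at most δ; that is, P[ ¬( M ⪯ (d/δ) V ) ] ≤ δ. -/

import Mathlib

/-!
With `W = V^{-1/2}`, the whitened matrix `W M W` is positive semidefinite, hence dominated by
its trace times the identity; conjugating back, `tr (V⁻¹ M) ≤ c` already forces `M ⪯ c V`.
So `M ⪯ (d/δ) V` can only fail where `tr (V⁻¹ M) ≥ d/δ`, and since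
`E[tr (V⁻¹ M)] = tr (V⁻¹ E[M]) ≤ tr (V⁻¹ V) = d`, Markov's inequality bounds that event by `δ`.
-/

open MeasureTheory Matrix

open scoped MatrixOrder ComplexOrder

namespace Matrix

variable {𝕜 n : Type*} [RCLike 𝕜] [Fintype n] [DecidableEq n]

theorem PosSemidef.trace_mul_nonneg {A B : Matrix n n 𝕜} (hA : A.PosSemidef)
    (hB : B.PosSemidef) : 0 ≤ (A * B).trace := by
  rw [← CFC.sqrt_mul_sqrt_self A hA.nonneg, Matrix.mul_assoc, trace_mul_comm]
  exact (conjugate_nonneg_of_nonneg hB.nonneg (CFC.sqrt_nonneg A)).posSemidef.trace_nonneg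

theorem PosSemidef.le_trace_smul_one {A : Matrix n n 𝕜} (hA : A.PosSemidef) :
    A ≤ A.trace • 1 := by
  have hle : A ≤ algebraMap ℝ _ (∑ i, hA.1.eigenvalues i) := by
    refine le_algebraMap_of_spectrum_le fun x hx => ?_
    rw [hA.1.spectrum_real_eq_range_eigenvalues] at hx
    obtain ⟨i, rfl⟩ := hx
    exact Finset.single_le_sum (fun j _ => hA.eigenvalues_nonneg j) (Finset.mem_univ i)
  rw [hA.1.trace_eq_sum_eigenvalues, ← RCLike.ofReal_sum, ← RCLike.real_smul_eq_coe_smul,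
    ← Algebra.algebraMap_eq_smul_one]
  exact hle

theorem PosDef.le_smul_of_trace_inv_mul_le {V A : Matrix n n 𝕜} (hV : V.PosDef)
    (hA : A.PosSemidef) {c : 𝕜} (h : (V⁻¹ * A).trace ≤ c) : A ≤ c • V := by
  set R := CFC.sqrt V
  have hR : IsSelfAdjoint R := (CFC.sqrt_nonneg V).isSelfAdjoint
  have hRR : R * R = V := CFC.sqrt_mul_sqrt_self V hV.posSemidef.nonneg
  have hRunit : IsUnit R := isUnit_of_mul_isUnit_left (hRR ▸ hV.isUnit)
  set W := R⁻¹
  have hW : IsSelfAdjoint W := IsHermitian.inv hR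
  have hWW : W * W = V⁻¹ := by rw [← mul_inv_rev, hRR]
  have hN : (W * A * W).PosSemidef := by
    simpa only [show Wᴴ = W from hW] using hA.mul_mul_conjTranspose_same W
  have hWhitened : W * A * W ≤ c • 1 := calc
    W * A * W ≤ (W * A * W).trace • 1 := hN.le_trace_smul_one
    _ = (V⁻¹ * A).trace • 1 := by rw [trace_mul_cycle, hWW]
    _ ≤ c • 1 := by
      rw [le_iff, ← sub_smul]
      exact PosSemidef.one.smul (sub_nonneg.mpr h)
  have hRW : R * W = 1 := mul_nonsing_inv R ((isUnit_iff_isUnit_det R).mp hRunit)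
  have hWR : W * R = 1 := nonsing_inv_mul R ((isUnit_iff_isUnit_det R).mp hRunit)
  have hUnwhitened : R * (W * A * W) * R = A := by
    simp only [← Matrix.mul_assoc, hRW, Matrix.one_mul]
    rw [Matrix.mul_assoc, hWR, Matrix.mul_one]
  have hScale : R * (c • 1) * R = c • V := by
    rw [Matrix.mul_smul, Matrix.mul_one, Matrix.smul_mul, hRR]
  simpa only [hUnwhitened, hScale] using hR.conjugate_le_conjugate hWhitened

theorem PosDef.trace_inv_mul_le_card_of_le {V B : Matrix n n 𝕜} (hV : V.PosDef) (hB : B ≤ V) :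
    (V⁻¹ * B).trace ≤ Fintype.card n := by
  have h := hV.inv.posSemidef.trace_mul_nonneg hB
  rwa [Matrix.mul_sub, nonsing_inv_mul V ((isUnit_iff_isUnit_det V).mp hV.isUnit), trace_sub,
    trace_one, sub_nonneg] at h

theorem linearMap_apply_eq_sum_smul {R E m : Type*} [CommSemiring R] [AddCommMonoid E]
    [Module R E] [Fintype m] [DecidableEq m] (L : Matrix m n R →ₗ[R] E) (A : Matrix m n R) :
    L A = ∑ i, ∑ j, A i j • L (single i j 1) := by
  conv_lhs => rw [matrix_eq_sum_single A]
  simp only [map_sum, ← L.map_smul, smul_single, smul_eq_mul, mul_one]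

end Matrix

section MatrixValuedIntegral

variable {Ω m n E : Type*} [MeasurableSpace Ω] {μ : Measure Ω} [Fintype m] [Fintype n]
  [DecidableEq m] [DecidableEq n] [NormedAddCommGroup E] [NormedSpace ℝ E]
  {M : Ω → Matrix m n ℝ}

theorem integrable_linearMap_matrix (hM : ∀ i j, Integrable (fun ω => M ω i j) μ)
    (L : Matrix m n ℝ →ₗ[ℝ] E) : Integrable (fun ω => L (M ω)) μ := by
  rw [funext fun ω => linearMap_apply_eq_sum_smul L (M ω)]
  exact integrable_finsetSum _ fun i _ => integrable_finsetSum _ fun j _ =>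
    (hM i j).smul_const _

theorem integral_linearMap_matrix [CompleteSpace E]
    (hM : ∀ i j, Integrable (fun ω => M ω i j) μ) (L : Matrix m n ℝ →ₗ[ℝ] E) :
    ∫ ω, L (M ω) ∂μ = L (of fun i j => ∫ ω, M ω i j ∂μ) := by
  rw [funext fun ω => linearMap_apply_eq_sum_smul L (M ω), linearMap_apply_eq_sum_smul L,
    integral_finsetSum _ fun i _ => integrable_finsetSum _ fun j _ => (hM i j).smul_const _]
  refine Finset.sum_congr rfl fun i _ => ?_
  rw [integral_finsetSum _ fun j _ => (hM i j).smul_const _]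
  simp only [integral_smul_const, of_apply]

end MatrixValuedIntegral

theorem measure_ge_le_ofReal_integral_div {Ω : Type*} [MeasurableSpace Ω] {μ : Measure Ω}
    [IsFiniteMeasure μ] {f : Ω → ℝ} (hf_nonneg : 0 ≤ᵐ[μ] f) (hf : Integrable f μ) {c : ℝ}
    (hc : 0 < c) : μ {ω | c ≤ f ω} ≤ ENNReal.ofReal ((∫ ω, f ω ∂μ) / c) := by
  rw [← ofReal_measureReal]
  exact ENNReal.ofReal_le_ofReal
    ((le_div_iff₀' hc).mpr (mul_meas_ge_le_integral_of_nonneg hf_nonneg hf c))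

/-- Markov-type bound for random positive semidefinite matrices: if `M` is almost surely
symmetric positive semidefinite with integrable entries, `V ≻ 0` is deterministic, and
`E[M] ⪯ V` in the Loewner order, then `M ⪯ (d/δ)·V` fails with probability at most `δ`. -/
theorem psd_matrix_markov
    {Ω : Type} [MeasurableSpace Ω] (μ : Measure Ω) [IsProbabilityMeasure μ]
    (d : ℕ) (hd : 1 ≤ d) (δ : ℝ) (hδ : δ ∈ Set.Ioo (0 : ℝ) 1)
    (M : Ω → Matrix (Fin d) (Fin d) ℝ)
    (hint : ∀ i j, Integrable (fun ω => M ω i j) μ)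
    (hpsd : ∀ᵐ ω ∂μ, (M ω).PosSemidef)
    (V : Matrix (Fin d) (Fin d) ℝ) (hV : V.PosDef)
    (hEV : (V - Matrix.of fun i j => ∫ ω, M ω i j ∂μ).PosSemidef) :
    μ {ω | ¬ ((((d : ℝ) / δ) • V - M ω).PosSemidef)} ≤ ENNReal.ofReal δ := by
  set c := (d : ℝ) / δ
  have hc : 0 < c := div_pos (by exact_mod_cast hd) hδ.1
  let L := traceLinearMap (Fin d) ℝ ℝ ∘ₗ LinearMap.mulLeft ℝ V⁻¹
  have hL_nonneg : 0 ≤ᵐ[μ] fun ω => L (M ω) :=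
    hpsd.mono fun ω hω => hV.inv.posSemidef.trace_mul_nonneg hω
  have hL_integral : ∫ ω, L (M ω) ∂μ ≤ d := by
    rw [integral_linearMap_matrix hint]
    have h := hV.trace_inv_mul_le_card_of_le hEV
    rw [Fintype.card_fin] at h
    exact h
  have hbad : {ω | ¬ (c • V - M ω).PosSemidef} ≤ᵐ[μ] {ω | c ≤ L (M ω)} := by
    filter_upwards [hpsd] with ω hω hnot
    by_contra hlt
    exact hnot (hV.le_smul_of_trace_inv_mul_le hω (not_le.mp hlt).le)
  calc μ {ω | ¬ (c • V - M ω).PosSemidef}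
      ≤ μ {ω | c ≤ L (M ω)} := measure_mono_ae hbad
    _ ≤ ENNReal.ofReal ((∫ ω, L (M ω) ∂μ) / c) :=
      measure_ge_le_ofReal_integral_div hL_nonneg (integrable_linearMap_matrix hint L) hc
    _ ≤ ENNReal.ofReal (d / c) := ENNReal.ofReal_le_ofReal (by gcongr)
    _ = ENNReal.ofReal δ := by rw [div_div_cancel₀ (by positivity)]
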